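/- Let n > 2, let g be a symmetric positive definite n×n real matrix and P a symmetric n×n real matrix, and for x ∈ ℝ set g_x := g − x²·P + (x⁴/4)·P·g⁻¹·P. Then there exists ε > 0 such that for all x with |x| < ε one has det(g_x) > 0 and ( det(g_x) / det(g) )^{1/2} = Σ_{k=0}^{n} (−2)^{−k} · σ_k(g⁻¹P) · x^{2k}, where σ_k(A) denotes the sum over all subsets S of Fin n of cardinality k of the determinants of the principal submatrices of A with rows and columns indexed by S (with σ_0(A) = 1). -/

import Mathlib

/-! Completing the square, `g_x = g (1 - (x²/2) g⁻¹P)²`, so `det g_x / det g` is the square of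
`det (1 - (x²/2) g⁻¹P)`. This determinant is `1` at `x = 0`, hence positive for small `x`, where it
is therefore the square root; expanding `det (1 + t M)` by multilinearity gives `∑ σ_k(M) tᵏ`. -/

/-- `σ_k(A)`: the sum of the principal `k × k` minors of the matrix `A`
(with `σ_0(A) = 1`). -/
def principalMinorSum {n : ℕ} (k : ℕ) (A : Matrix (Fin n) (Fin n) ℝ) : ℝ :=
  ∑ S ∈ Finset.powersetCard k (Finset.univ : Finset (Fin n)),
    Matrix.det (fun i j : S => A i.1 j.1)

open Polynomial Matrix Topology

namespace Matrix

variable {ι R : Type*} [Fintype ι] [DecidableEq ι] [CommRing R]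

theorem det_one_add_smul_eq_sum_minors (t : R) (M : Matrix ι ι R) :
    det (1 + t • M) = ∑ k ∈ Finset.range (Fintype.card ι + 1),
      (∑ s ∈ Finset.univ.powersetCard k, (M.submatrix (Subtype.val : s → ι) Subtype.val).det) *
        t ^ k := by
  have hdeg : (det (1 + (X : R[X]) • M.map C)).natDegree < Fintype.card ι + 1 := by
    refine Nat.lt_succ_of_le (le_of_eq_of_le ?_ (natDegree_det_X_add_C_le M 1))
    rw [add_comm, Matrix.map_one C (map_zero C) (map_one C)]
  calc det (1 + t • M) = (det (1 + (X : R[X]) • M.map C)).eval t := by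
        simp [eval_det, ← smul_eq_mul_diagonal]
    _ = _ := by
        simp_rw [eval_eq_sum_range' hdeg, coeff_det_one_add_X_smul_eq_sum_minors]

theorem mul_one_add_smul_inv_mul_sq (g P : Matrix ι ι R) (hg : IsUnit g.det) (c : R) :
    g * (1 + c • (g⁻¹ * P)) ^ 2 = g + (2 * c) • P + c ^ 2 • (P * g⁻¹ * P) := by
  have hg_mul : g * (1 + c • (g⁻¹ * P)) = g + c • P := by
    rw [mul_add, mul_one, Matrix.mul_smul, ← mul_assoc, mul_nonsing_inv g hg, one_mul]
  rw [sq, ← mul_assoc, hg_mul, add_mul, hg_mul, smul_mul, mul_add, mul_one, Matrix.mul_smul,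
    ← mul_assoc]
  module

theorem eventually_det_one_add_smul_pos (M : Matrix ι ι ℝ) :
    ∀ᶠ t in 𝓝 (0 : ℝ), 0 < det (1 + t • M) := by
  have hcont : Continuous fun t : ℝ => det (1 + t • M) := by fun_prop
  have hzero : (0 : ℝ) < det (1 + (0 : ℝ) • M) := by simp
  simpa using hcont.continuousAt.eventually (lt_mem_nhds hzero)

end Matrix

theorem principalMinorSum_eq_sum_det_submatrix {n : ℕ} (k : ℕ) (A : Matrix (Fin n) (Fin n) ℝ) :
    principalMinorSum k A = ∑ s ∈ Finset.univ.powersetCard k,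
      (A.submatrix (Subtype.val : s → Fin n) Subtype.val).det :=
  rfl

theorem sqrt_det_poincare_expansion_general (n : ℕ)
    (g P : Matrix (Fin n) (Fin n) ℝ) (hg : g.PosDef) :
    ∃ ε > (0:ℝ), ∀ x : ℝ, |x| < ε →
      0 < (g - x ^ 2 • P + (x ^ 4 / 4) • (P * g⁻¹ * P)).det ∧
      Real.sqrt ((g - x ^ 2 • P + (x ^ 4 / 4) • (P * g⁻¹ * P)).det / g.det) =
        ∑ k ∈ Finset.range (n + 1),
          ((-2 : ℝ) ^ k)⁻¹ * principalMinorSum k (g⁻¹ * P) * x ^ (2 * k) := by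
  set t : ℝ → ℝ := fun x => -(x ^ 2 / 2)
  have hfamily (x : ℝ) :
      g - x ^ 2 • P + (x ^ 4 / 4) • (P * g⁻¹ * P) = g * (1 + t x • (g⁻¹ * P)) ^ 2 := by
    rw [mul_one_add_smul_inv_mul_sq g P hg.det_pos.ne'.isUnit]
    module
  have hexpand (x : ℝ) : det (1 + t x • (g⁻¹ * P)) = ∑ k ∈ Finset.range (n + 1),
      ((-2 : ℝ) ^ k)⁻¹ * principalMinorSum k (g⁻¹ * P) * x ^ (2 * k) := by
    rw [det_one_add_smul_eq_sum_minors, Fintype.card_fin]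
    refine Finset.sum_congr rfl fun k _ => ?_
    rw [principalMinorSum_eq_sum_det_submatrix, show t x ^ k = ((-2 : ℝ) ^ k)⁻¹ * x ^ (2 * k) by
      rw [pow_mul, ← inv_pow, ← mul_pow]; ring]
    ring
  have ht : Filter.Tendsto t (𝓝 0) (𝓝 0) := by
    simpa [t] using (by fun_prop : Continuous t).tendsto 0
  obtain ⟨ε, hε, hpos⟩ :=
    Metric.eventually_nhds_iff.mp (ht.eventually (eventually_det_one_add_smul_pos (g⁻¹ * P)))
  refine ⟨ε, hε, fun x hx => ?_⟩
  have hx_pos := hpos (by simpa [Real.dist_eq] using hx)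
  rw [hfamily, det_mul, det_pow]
  refine ⟨mul_pos hg.det_pos (pow_pos hx_pos 2), ?_⟩
  rw [mul_div_cancel_left₀ _ hg.det_pos.ne', Real.sqrt_sq hx_pos.le, hexpand]

theorem sqrt_det_poincare_expansion (n : ℕ) (hn : 2 < n)
    (g P : Matrix (Fin n) (Fin n) ℝ) (hg : g.PosDef) (hgs : g.IsSymm)
    (hP : P.IsSymm) :
    ∃ ε > (0:ℝ), ∀ x : ℝ, |x| < ε →
      0 < (g - x ^ 2 • P + (x ^ 4 / 4) • (P * g⁻¹ * P)).det ∧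
      Real.sqrt ((g - x ^ 2 • P + (x ^ 4 / 4) • (P * g⁻¹ * P)).det / g.det) =
        ∑ k ∈ Finset.range (n + 1),
          ((-2 : ℝ) ^ k)⁻¹ * principalMinorSum k (g⁻¹ * P) * x ^ (2 * k) :=
  sqrt_det_poincare_expansion_general n g P hg
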